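/- Let 𝒟 be a finite σ-structure. Suppose that for i = 1, 2, hᵢ is a Uᵢ-surjective Xᵢ-total surjective hyper-endomorphism of 𝒟 where |Uᵢ| is minimal among cardinalities of subsets U of D such that 𝒟 has a U-surjective surjective hyper-endomorphism, |Xᵢ| is minimal among cardinalities of subsets X of D such that 𝒟 has an X-total surjective hyper-endomorphism, and, subject to these minimality conditions, |Uᵢ ∩ Xᵢ| is maximal. Then the substructure of 𝒟 induced by U₁ ∪ X₁ is isomorphic to the substructure of 𝒟 induced by U₂ ∪ X₂ (i.e. the U-X-core of 𝒟 is unique up to isomorphism). -/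

import Mathlib

namespace MC

/-- `f` is a surjective hyper-endomorphism of `(D, I)`: total, surjective and
preserving all relations. -/
def IsSHE {σ : Type} {ar : σ → ℕ} {D : Type}
    (I : ∀ r : σ, (Fin (ar r) → D) → Prop) (f : D → Set D) : Prop :=
  (∀ a : D, (f a).Nonempty) ∧ (∀ b : D, ∃ a : D, b ∈ f a) ∧
  ∀ (r : σ) (t : Fin (ar r) → D), I r t →
    ∀ s : Fin (ar r) → D, (∀ i, s i ∈ f (t i)) → I r s

/-- `f` is `U`-surjective: every element is in the image of some element of `U`. -/
def USurjective {D : Type} (f : D → Set D) (U : Set D) : Prop :=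
  ∀ b : D, ∃ u ∈ U, b ∈ f u

/-- `f` is `X`-total: the image of every element meets `X`. -/
def XTotal {D : Type} (f : D → Set D) (X : Set D) : Prop :=
  ∀ a : D, ∃ x ∈ X, x ∈ f a

/-!
Raising a witnessing hyper-endomorphism `h` to the power `|D|!` yields a witness `E` with
`z ∈ E z` for every `z ∈ U ∪ X`: by minimality of `|X|`, any selection `x ↦ s x ∈ h x ∩ X` is
injective on `X`, hence a permutation of `X`, so `x = s^[|D|!] x ∈ h^(|D|!) x`; dually for `U`.

For two such witnesses `E₁, E₂`, minimality of `|U₂|` makes every map `r : U₂ → U₁` with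
`v ∈ E₁ (r v)` injective, hence bijective. Its inverse `μ`, together with a selection
`β x ∈ E₂ x ∩ X₂`, gives a map `θ` (`μ` on `U₁`, `β` on `X₁ \ U₁`) selected from `E₂ ∘ E₁`, hence a
homomorphism of the induced substructures. It is injective because maximality of `|U₂ ∩ X₂|`
forbids `θ` to send a point of `X₁ \ U₁` into `U₂`. Injective homomorphisms in both directions
between finite structures are isomorphisms: their composite is a permutation, some power of
which is the identity.
-/

open Set Function
open scoped Nat

theorem iterate_factorial_card_eq_of_injOn {α : Type*} [Finite α] {f : α → α} {S : Set α}
    (hf : MapsTo f S S) (hi : InjOn f S) {z : α} (hz : z ∈ S) : f^[(Nat.card α)!] z = z := by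
  have : Fintype S := Fintype.ofFinite S
  have hid := injective_iff_iterate_factorial_card_eq_id.1 (hf.restrict_inj.2 hi)
  obtain ⟨m, hm⟩ : (Fintype.card S)! ∣ (Nat.card α)! := Nat.factorial_dvd_factorial <| by
    rw [Fintype.card_eq_nat_card]; exact Finite.card_subtype_le _
  have hper : IsPeriodicPt (hf.restrict f S S) ((Fintype.card S)! * m) ⟨z, hz⟩ :=
    IsPeriodicPt.mul_const (congrFun hid _) m
  rw [hm]
  simpa [IsPeriodicPt, IsFixedPt, hf.iterate_restrict] using congrArg Subtype.val hper

section HyperEndomorphisms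

variable {σ : Type} {ar : σ → ℕ} {D : Type} {I : ∀ r : σ, (Fin (ar r) → D) → Prop}

def comp (f g : D → Set D) : D → Set D := fun a => {c | ∃ b ∈ g a, c ∈ f b}

def cpow (f : D → Set D) : ℕ → D → Set D
  | 0 => fun a => {a}
  | n + 1 => comp f (cpow f n)

theorem comp_assoc (f g h : D → Set D) : comp (comp f g) h = comp f (comp g h) := by
  funext a; ext c
  exact ⟨fun ⟨b, hb, d, hd, hc⟩ => ⟨d, ⟨b, hb, hd⟩, hc⟩,
    fun ⟨d, ⟨b, hb, hd⟩, hc⟩ => ⟨b, hb, d, hd, hc⟩⟩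

theorem cpow_succ' (f : D → Set D) : ∀ n, cpow f (n + 1) = comp (cpow f n) f
  | 0 => by funext a; ext c; simp [cpow, comp]
  | n + 1 => (congrArg (comp f) (cpow_succ' f n)).trans (comp_assoc _ _ _).symm

theorem isSHE_comp {f g : D → Set D} (hf : IsSHE I f) (hg : IsSHE I g) :
    IsSHE I (comp f g) := by
  obtain ⟨hf_ne, hf_surj, hf_pres⟩ := hf
  obtain ⟨hg_ne, hg_surj, hg_pres⟩ := hg
  refine ⟨fun a => ?_, fun c => ?_, fun r t ht s hs => ?_⟩
  · obtain ⟨b, hb⟩ := hg_ne a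
    exact (hf_ne b).imp fun c hc => ⟨b, hb, hc⟩
  · obtain ⟨b, hb⟩ := hf_surj c
    exact (hg_surj b).imp fun a ha => ⟨b, ha, hb⟩
  · choose b hb hsb using hs
    exact hf_pres r b (hg_pres r t ht b hb) s hsb

theorem isSHE_cpow {f : D → Set D} (hf : IsSHE I f) : ∀ n, IsSHE I (cpow f n)
  | 0 => ⟨fun a => ⟨a, rfl⟩, fun b => ⟨b, rfl⟩,
      fun r t ht s hs => by rwa [show s = t from funext hs]⟩
  | n + 1 => isSHE_comp hf (isSHE_cpow hf n)

theorem xTotal_comp {f g : D → Set D} {X : Set D} (hf : XTotal f X)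
    (hg : ∀ a, (g a).Nonempty) : XTotal (comp f g) X := fun a =>
  let ⟨b, hb⟩ := hg a
  (hf b).imp fun _ ⟨hx, hxb⟩ => ⟨hx, b, hb, hxb⟩

theorem uSurjective_comp {f g : D → Set D} {U : Set D} (hg : USurjective g U)
    (hf : ∀ c, ∃ b, c ∈ f b) : USurjective (comp f g) U := fun c =>
  let ⟨b, hb⟩ := hf c
  (hg b).imp fun _ ⟨hu, hbu⟩ => ⟨hu, b, hbu, hb⟩

theorem xTotal_cpow_succ {f : D → Set D} {X : Set D} (hf : IsSHE I f) (hX : XTotal f X)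
    (n : ℕ) : XTotal (cpow f (n + 1)) X :=
  xTotal_comp hX (isSHE_cpow hf n).1

theorem uSurjective_cpow_succ {f : D → Set D} {U : Set D} (hf : IsSHE I f)
    (hU : USurjective f U) (n : ℕ) : USurjective (cpow f (n + 1)) U := by
  rw [cpow_succ']
  exact uSurjective_comp hU (isSHE_cpow hf n).2.1

theorem xTotal_comp_image {E c : D → Set D} {X : Set D} {s : D → D} (hX : XTotal E X)
    (hs : ∀ x ∈ X, s x ∈ c x) : XTotal (comp c E) (s '' X) := fun a =>
  let ⟨x, hx, hxa⟩ := hX a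
  ⟨s x, mem_image_of_mem s hx, x, hxa, hs x hx⟩

theorem uSurjective_comp_image {E c : D → Set D} {U : Set D} {r : D → D}
    (hU : USurjective E U) (hr : ∀ v ∈ U, v ∈ c (r v)) : USurjective (comp E c) (r '' U) :=
  fun b =>
  let ⟨v, hv, hb⟩ := hU b
  ⟨r v, mem_image_of_mem r hv, v, hr v hv, hb⟩

theorem iterate_mem_cpow {f : D → Set D} {X : Set D} {s : D → D} (hs : MapsTo s X X)
    (hsf : ∀ x ∈ X, s x ∈ f x) : ∀ n, ∀ x ∈ X, s^[n] x ∈ cpow f n x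
  | 0, _, _ => rfl
  | n + 1, x, hx => by
      rw [iterate_succ_apply']
      exact ⟨_, iterate_mem_cpow hs hsf n x hx, hsf _ (hs.iterate n hx)⟩

theorem mem_cpow_iterate {f : D → Set D} {U : Set D} {r : D → D} (hr : MapsTo r U U)
    (hrf : ∀ v ∈ U, v ∈ f (r v)) : ∀ n, ∀ v ∈ U, v ∈ cpow f n (r^[n] v)
  | 0, _, _ => rfl
  | n + 1, v, hv => ⟨r v, mem_cpow_iterate hr hrf n (r v) (hr hv), hrf v hv⟩

def AdmitsUSurjective (I : ∀ r : σ, (Fin (ar r) → D) → Prop) (U : Set D) : Prop :=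
  ∃ f, IsSHE I f ∧ USurjective f U

def AdmitsXTotal (I : ∀ r : σ, (Fin (ar r) → D) → Prop) (X : Set D) : Prop :=
  ∃ f, IsSHE I f ∧ XTotal f X

theorem injOn_of_xTotal [Finite D] {E c : D → Set D} {X : Set D} {s : D → D}
    (hE : IsSHE I E) (hX : XTotal E X) (hmin : ∀ X', AdmitsXTotal I X' → X.ncard ≤ X'.ncard)
    (hc : IsSHE I c) (hs : ∀ x ∈ X, s x ∈ c x) : InjOn s X :=
  injOn_of_ncard_image_eq <| (ncard_image_le X.toFinite).antisymm <|
    hmin _ ⟨_, isSHE_comp hc hE, xTotal_comp_image hX hs⟩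

theorem injOn_of_uSurjective [Finite D] {E c : D → Set D} {U : Set D} {r : D → D}
    (hE : IsSHE I E) (hU : USurjective E U)
    (hmin : ∀ U', AdmitsUSurjective I U' → U.ncard ≤ U'.ncard)
    (hc : IsSHE I c) (hr : ∀ v ∈ U, v ∈ c (r v)) : InjOn r U :=
  injOn_of_ncard_image_eq <| (ncard_image_le U.toFinite).antisymm <|
    hmin _ ⟨_, isSHE_comp hE hc, uSurjective_comp_image hU hr⟩

variable (I) in
structure IsCoreWitness (E : D → Set D) (U X : Set D) : Prop where
  isSHE : IsSHE I E
  uSurjective : USurjective E U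
  xTotal : XTotal E X
  uMin : ∀ U', AdmitsUSurjective I U' → U.ncard ≤ U'.ncard
  xMin : ∀ X', AdmitsXTotal I X' → X.ncard ≤ X'.ncard
  self_mem_of_mem_U : ∀ u ∈ U, u ∈ E u
  self_mem_of_mem_X : ∀ x ∈ X, x ∈ E x

theorem IsCoreWitness.of_minimal [Finite D] {h : D → Set D} {U X : Set D} (hh : IsSHE I h)
    (hU : USurjective h U) (hX : XTotal h X)
    (hUmin : ∀ U', AdmitsUSurjective I U' → U.ncard ≤ U'.ncard)
    (hXmin : ∀ X', AdmitsXTotal I X' → X.ncard ≤ X'.ncard) :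
    IsCoreWitness I (cpow h (Nat.card D)!) U X := by
  obtain ⟨n, hn⟩ := Nat.exists_eq_add_one.2 (Nat.factorial_pos (Nat.card D))
  choose s hsX hsh using hX
  choose r hrU hrh using hU
  have hs : MapsTo s X X := fun x _ => hsX x
  have hr : MapsTo r U U := fun v _ => hrU v
  refine ⟨isSHE_cpow hh _, hn ▸ uSurjective_cpow_succ hh (fun b => ⟨r b, hrU b, hrh b⟩) n,
    hn ▸ xTotal_cpow_succ hh (fun a => ⟨s a, hsX a, hsh a⟩) n, hUmin, hXmin,
    fun u hu => ?_, fun x hx => ?_⟩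
  · have hinj : InjOn r U :=
      injOn_of_uSurjective hh (fun b => ⟨r b, hrU b, hrh b⟩) hUmin hh fun v _ => hrh v
    simpa only [iterate_factorial_card_eq_of_injOn hr hinj hu] using
      mem_cpow_iterate hr (fun v _ => hrh v) (Nat.card D)! u hu
  · have hinj : InjOn s X :=
      injOn_of_xTotal hh (fun a => ⟨s a, hsX a, hsh a⟩) hXmin hh fun x _ => hsh x
    simpa only [iterate_factorial_card_eq_of_injOn hs hinj hx] using
      iterate_mem_cpow hs (fun x _ => hsh x) (Nat.card D)! x hx

end HyperEndomorphisms

section Homomorphisms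

variable {σ : Type} {ar : σ → ℕ} {D : Type} {I : ∀ r : σ, (Fin (ar r) → D) → Prop}
  {S T : Set D} {f g : D → D}

variable (I) in
def HomOn (S : Set D) (f : D → D) : Prop :=
  ∀ r (t : Fin (ar r) → D), (∀ i, t i ∈ S) → I r t → I r (f ∘ t)

theorem HomOn.of_mem {c : D → Set D} (hc : IsSHE I c) (hf : ∀ z ∈ S, f z ∈ c z) :
    HomOn I S f :=
  fun r t ht hI => hc.2.2 r t hI _ fun i => hf _ (ht i)

theorem HomOn.comp (hg : HomOn I T g) (hf : HomOn I S f) (hST : MapsTo f S T) :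
    HomOn I S (g ∘ f) :=
  fun r t ht hI => hg r (f ∘ t) (fun i => hST (ht i)) (hf r t ht hI)

theorem HomOn.iterate (hf : HomOn I S f) (hS : MapsTo f S S) : ∀ n, HomOn I S f^[n]
  | 0 => fun _ _ _ hI => hI
  | n + 1 => by rw [iterate_succ]; exact (hf.iterate hS n).comp hf hS

theorem HomOn.iff_of_injOn [Finite D] (hf : HomOn I S f) (hS : MapsTo f S S) (hi : InjOn f S)
    {r : σ} {t : Fin (ar r) → D} (ht : ∀ i, t i ∈ S) : I r (f ∘ t) ↔ I r t := by
  refine ⟨fun h => ?_, hf r t ht⟩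
  obtain ⟨n, hn⟩ := Nat.exists_eq_add_one.2 (Nat.factorial_pos (Nat.card D))
  have hperiod : f^[n] ∘ f ∘ t = t := funext fun i => by
    rw [comp_apply, comp_apply, ← iterate_succ_apply, Nat.succ_eq_add_one, ← hn,
      iterate_factorial_card_eq_of_injOn hS hi (ht i)]
  rw [← hperiod]
  exact hf.iterate hS n r _ (fun i => hS (ht i)) h

theorem exists_equiv_of_homOn [Finite D] (hf : MapsTo f S T) (hfi : InjOn f S)
    (hfh : HomOn I S f) (hg : MapsTo g T S) (hgi : InjOn g T) (hgh : HomOn I T g) :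
    ∃ e : S ≃ T, ∀ (r : σ) (t : Fin (ar r) → S),
      I r (fun i => (t i : D)) ↔ I r (fun i => (e (t i) : D)) := by
  have himage : f '' S = T := eq_of_subset_of_ncard_le hf.image_subset <| by
    rw [hfi.ncard_image]; exact ncard_le_ncard_of_injOn g hg hgi
  refine ⟨BijOn.equiv f ⟨hf, hfi, himage ▸ surjOn_image f S⟩, fun r t => ?_⟩
  have ht : ∀ i, (t i : D) ∈ S := fun i => (t i).2
  have hloop := (hgh.comp hfh hf).iff_of_injOn (hg.comp hf) (hgi.comp hfi hf) ht
  exact ⟨hfh r _ ht, fun h => hloop.1 (hgh r _ (fun i => hf (ht i)) h)⟩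

end Homomorphisms

section CoreWitnesses

variable {σ : Type} {ar : σ → ℕ} {D : Type} [Finite D] {I : ∀ r : σ, (Fin (ar r) → D) → Prop}
  {E₁ E₂ : D → Set D} {U₁ X₁ U₂ X₂ : Set D}

theorem IsCoreWitness.exists_bijOn_mem (W₁ : IsCoreWitness I E₁ U₁ X₁)
    (W₂ : IsCoreWitness I E₂ U₂ X₂) : ∃ μ : D → D, BijOn μ U₁ U₂ ∧ ∀ u ∈ U₁, μ u ∈ E₁ u := by
  choose r hrU hrE using W₁.uSurjective
  have hinj : InjOn r U₂ :=
    injOn_of_uSurjective W₂.isSHE W₂.uSurjective W₂.uMin W₁.isSHE fun v _ => hrE v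
  have himage : r '' U₂ = U₁ := eq_of_subset_of_ncard_le (image_subset_iff.2 fun v _ => hrU v) <| by
    rw [hinj.ncard_image]; exact W₁.uMin _ ⟨E₂, W₂.isSHE, W₂.uSurjective⟩
  have hbij : BijOn r U₂ U₁ := himage ▸ hinj.bijOn_image
  rcases isEmpty_or_nonempty D with hD | hD
  · exact ⟨id, by simp only [Subsingleton.elim U₁ U₂, bijOn_id], isEmptyElim⟩
  refine ⟨invFunOn r U₂, hbij.symm hbij.invOn_invFunOn.symm, fun u hu => ?_⟩
  simpa only [hbij.invOn_invFunOn.2 hu] using hrE (invFunOn r U₂ u)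

theorem IsCoreWitness.mem_U_of_mem_X (W₁ : IsCoreWitness I E₁ U₁ X₁)
    (W₂ : IsCoreWitness I E₂ U₂ X₂)
    (hmax₂ : ∀ X, AdmitsXTotal I X → X.ncard = X₂.ncard → (U₂ ∩ X).ncard ≤ (U₂ ∩ X₂).ncard)
    (hle : (U₂ ∩ X₂).ncard ≤ (U₁ ∩ X₁).ncard) {θ : D → D} (hθU : MapsTo θ U₁ U₂)
    (hθE : ∀ x ∈ X₁, θ x ∈ comp E₂ E₁ x) {x : D} (hx : x ∈ X₁) (hθx : θ x ∈ U₂) : x ∈ U₁ := by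
  have hinj : InjOn θ X₁ :=
    injOn_of_xTotal W₁.isSHE W₁.xTotal W₁.xMin (isSHE_comp W₂.isSHE W₁.isSHE) hθE
  have htotal : AdmitsXTotal I (θ '' X₁) :=
    ⟨_, isSHE_comp (isSHE_comp W₂.isSHE W₁.isSHE) W₁.isSHE, xTotal_comp_image W₁.xTotal hθE⟩
  have hcard : (θ '' X₁).ncard = X₂.ncard := by
    rw [hinj.ncard_image]
    exact (W₁.xMin _ ⟨E₂, W₂.isSHE, W₂.xTotal⟩).antisymm (W₂.xMin _ ⟨E₁, W₁.isSHE, W₁.xTotal⟩)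
  have heq : U₁ ∩ X₁ = X₁ ∩ θ ⁻¹' U₂ := by
    refine eq_of_subset_of_ncard_le (fun u hu => ⟨hu.2, hθU hu.1⟩) ?_
    calc (X₁ ∩ θ ⁻¹' U₂).ncard = (U₂ ∩ θ '' X₁).ncard := by
          rw [← (hinj.mono inter_subset_left).ncard_image, image_inter_preimage, inter_comm]
      _ ≤ (U₂ ∩ X₂).ncard := hmax₂ _ htotal hcard
      _ ≤ (U₁ ∩ X₁).ncard := hle
  exact (heq.symm.subset ⟨hx, hθx⟩).1

theorem IsCoreWitness.exists_embedding (W₁ : IsCoreWitness I E₁ U₁ X₁)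
    (W₂ : IsCoreWitness I E₂ U₂ X₂)
    (hmax₂ : ∀ X, AdmitsXTotal I X → X.ncard = X₂.ncard → (U₂ ∩ X).ncard ≤ (U₂ ∩ X₂).ncard)
    (hle : (U₂ ∩ X₂).ncard ≤ (U₁ ∩ X₁).ncard) :
    ∃ θ : D → D, MapsTo θ (U₁ ∪ X₁) (U₂ ∪ X₂) ∧ InjOn θ (U₁ ∪ X₁) ∧ HomOn I (U₁ ∪ X₁) θ := by
  classical
  obtain ⟨μ, hμ, hμE⟩ := W₁.exists_bijOn_mem W₂
  choose β hβX hβE using W₂.xTotal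
  have hθE : ∀ z ∈ U₁ ∪ X₁, U₁.piecewise μ β z ∈ comp E₂ E₁ z := by
    intro z hz
    by_cases hzU : z ∈ U₁
    · rw [piecewise_eq_of_mem _ _ _ hzU]
      exact ⟨μ z, hμE z hzU, W₂.self_mem_of_mem_U _ (hμ.mapsTo hzU)⟩
    · rw [piecewise_eq_of_notMem _ _ _ hzU]
      exact ⟨z, W₁.self_mem_of_mem_X z (hz.resolve_left hzU), hβE z⟩
  have hθU : MapsTo (U₁.piecewise μ β) U₁ U₂ := fun u hu => by
    rw [piecewise_eq_of_mem _ _ _ hu]; exact hμ.mapsTo hu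
  refine ⟨U₁.piecewise μ β, fun z _ => ?_, ?_, HomOn.of_mem (isSHE_comp W₂.isSHE W₁.isSHE) hθE⟩
  · by_cases hzU : z ∈ U₁
    · exact Or.inl (hθU hzU)
    · rw [piecewise_eq_of_notMem _ _ _ hzU]; exact Or.inr (hβX z)
  have hθX : InjOn (U₁.piecewise μ β) X₁ :=
    injOn_of_xTotal W₁.isSHE W₁.xTotal W₁.xMin (isSHE_comp W₂.isSHE W₁.isSHE)
      fun x hx => hθE x (Or.inr hx)
  rw [← union_sdiff_self, injOn_union disjoint_sdiff_right]
  refine ⟨hμ.injOn.congr fun u hu => (piecewise_eq_of_mem _ _ _ hu).symm,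
    hθX.mono sdiff_subset, fun u hu x hx hux => hx.2 ?_⟩
  exact W₁.mem_U_of_mem_X W₂ hmax₂ hle hθU (fun x hx => hθE x (Or.inr hx)) hx.1
    (hux ▸ hθU hu)

end CoreWitnesses

theorem UXcore_unique_up_to_iso_general {σ : Type} (ar : σ → ℕ)
    {D : Type} [Finite D]
    (I : ∀ r : σ, (Fin (ar r) → D) → Prop)
    (U₁ X₁ U₂ X₂ : Set D) (h₁ h₂ : D → Set D)
    (hshe₁ : IsSHE I h₁) (hU₁ : USurjective h₁ U₁) (hX₁ : XTotal h₁ X₁)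
    (hshe₂ : IsSHE I h₂) (hU₂ : USurjective h₂ U₂) (hX₂ : XTotal h₂ X₂)
    (hUmin₁ : ∀ U : Set D, (∃ f : D → Set D, IsSHE I f ∧ USurjective f U) →
      U₁.ncard ≤ U.ncard)
    (hXmin₁ : ∀ X : Set D, (∃ f : D → Set D, IsSHE I f ∧ XTotal f X) →
      X₁.ncard ≤ X.ncard)
    (hmax₁ : ∀ U X : Set D, (∃ f : D → Set D, IsSHE I f ∧ USurjective f U) →
      (∃ f : D → Set D, IsSHE I f ∧ XTotal f X) →
      U.ncard = U₁.ncard → X.ncard = X₁.ncard →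
      (U ∩ X).ncard ≤ (U₁ ∩ X₁).ncard)
    (hUmin₂ : ∀ U : Set D, (∃ f : D → Set D, IsSHE I f ∧ USurjective f U) →
      U₂.ncard ≤ U.ncard)
    (hXmin₂ : ∀ X : Set D, (∃ f : D → Set D, IsSHE I f ∧ XTotal f X) →
      X₂.ncard ≤ X.ncard)
    (hmax₂ : ∀ U X : Set D, (∃ f : D → Set D, IsSHE I f ∧ USurjective f U) →
      (∃ f : D → Set D, IsSHE I f ∧ XTotal f X) →
      U.ncard = U₂.ncard → X.ncard = X₂.ncard →
      (U ∩ X).ncard ≤ (U₂ ∩ X₂).ncard) :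
    ∃ e : ↥(U₁ ∪ X₁) ≃ ↥(U₂ ∪ X₂), ∀ (r : σ) (t : Fin (ar r) → ↥(U₁ ∪ X₁)),
      I r (fun i => (t i : D)) ↔ I r (fun i => (e (t i) : D)) := by
  have W₁ := IsCoreWitness.of_minimal hshe₁ hU₁ hX₁ hUmin₁ hXmin₁
  have W₂ := IsCoreWitness.of_minimal hshe₂ hU₂ hX₂ hUmin₂ hXmin₂
  have hU : U₁.ncard = U₂.ncard :=
    (hUmin₁ U₂ ⟨h₂, hshe₂, hU₂⟩).antisymm (hUmin₂ U₁ ⟨h₁, hshe₁, hU₁⟩)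
  have hX : X₁.ncard = X₂.ncard :=
    (hXmin₁ X₂ ⟨h₂, hshe₂, hX₂⟩).antisymm (hXmin₂ X₁ ⟨h₁, hshe₁, hX₁⟩)
  have hUX : (U₁ ∩ X₁).ncard = (U₂ ∩ X₂).ncard :=
    (hmax₂ U₁ X₁ ⟨h₁, hshe₁, hU₁⟩ ⟨h₁, hshe₁, hX₁⟩ hU hX).antisymm
      (hmax₁ U₂ X₂ ⟨h₂, hshe₂, hU₂⟩ ⟨h₂, hshe₂, hX₂⟩ hU.symm hX.symm)
  obtain ⟨θ, hθ, hθi, hθh⟩ := W₁.exists_embedding W₂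
    (fun X hX hcard => hmax₂ U₂ X ⟨h₂, hshe₂, hU₂⟩ hX rfl hcard) hUX.ge
  obtain ⟨θ', hθ', hθ'i, hθ'h⟩ := W₂.exists_embedding W₁
    (fun X hX hcard => hmax₁ U₁ X ⟨h₁, hshe₁, hU₁⟩ hX rfl hcard) hUX.le
  exact exists_equiv_of_homOn hθ hθi hθh hθ' hθ'i hθ'h

/-- The U-X-core is unique up to isomorphism: given two pairs of minimal sets
`(U₁, X₁)` and `(U₂, X₂)` (with maximal intersection) witnessed by surjective
hyper-endomorphisms, the substructures induced by `U₁ ∪ X₁` and `U₂ ∪ X₂`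
are isomorphic. -/
theorem UXcore_unique_up_to_iso {σ : Type} [Finite σ] (ar : σ → ℕ)
    {D : Type} [Finite D] [Nonempty D]
    (I : ∀ r : σ, (Fin (ar r) → D) → Prop)
    (U₁ X₁ U₂ X₂ : Set D) (h₁ h₂ : D → Set D)
    (hshe₁ : IsSHE I h₁) (hU₁ : USurjective h₁ U₁) (hX₁ : XTotal h₁ X₁)
    (hshe₂ : IsSHE I h₂) (hU₂ : USurjective h₂ U₂) (hX₂ : XTotal h₂ X₂)
    (hUmin₁ : ∀ U : Set D, (∃ f : D → Set D, IsSHE I f ∧ USurjective f U) →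
      U₁.ncard ≤ U.ncard)
    (hXmin₁ : ∀ X : Set D, (∃ f : D → Set D, IsSHE I f ∧ XTotal f X) →
      X₁.ncard ≤ X.ncard)
    (hmax₁ : ∀ U X : Set D, (∃ f : D → Set D, IsSHE I f ∧ USurjective f U) →
      (∃ f : D → Set D, IsSHE I f ∧ XTotal f X) →
      U.ncard = U₁.ncard → X.ncard = X₁.ncard →
      (U ∩ X).ncard ≤ (U₁ ∩ X₁).ncard)
    (hUmin₂ : ∀ U : Set D, (∃ f : D → Set D, IsSHE I f ∧ USurjective f U) →
      U₂.ncard ≤ U.ncard)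
    (hXmin₂ : ∀ X : Set D, (∃ f : D → Set D, IsSHE I f ∧ XTotal f X) →
      X₂.ncard ≤ X.ncard)
    (hmax₂ : ∀ U X : Set D, (∃ f : D → Set D, IsSHE I f ∧ USurjective f U) →
      (∃ f : D → Set D, IsSHE I f ∧ XTotal f X) →
      U.ncard = U₂.ncard → X.ncard = X₂.ncard →
      (U ∩ X).ncard ≤ (U₂ ∩ X₂).ncard) :
    ∃ e : ↥(U₁ ∪ X₁) ≃ ↥(U₂ ∪ X₂), ∀ (r : σ) (t : Fin (ar r) → ↥(U₁ ∪ X₁)),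
      I r (fun i => (t i : D)) ↔ I r (fun i => (e (t i) : D)) :=
  UXcore_unique_up_to_iso_general ar I U₁ X₁ U₂ X₂ h₁ h₂ hshe₁ hU₁ hX₁ hshe₂ hU₂ hX₂ hUmin₁ hXmin₁
    hmax₁ hUmin₂ hXmin₂ hmax₂

end MC
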